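/- arXiv:2301.03399 — 2 statements merged into one kernel-verified Lean document; each statement's English description precedes it below -/
import Mathlib

section
/- Fix j ∈ {1,…,N} and v > 0 and set σ₀² = 1. For every vector of nonnegative coefficients a = (a₁,…,a_N), the matrix Γ_a = h₀h₀* + Σ_{l=1}^N a_l·h_l h_l* + v·I satisfies SIR_j(Γ_a) ≤ SIR_j(Γ_opt), where Γ_opt = h₀h₀* + v·I (the member of the family with a = 0). In other words, Γ_opt maximizes SIR_j over this family. -/
open Matrix Finset Filter Topology

noncomputable section

/-- squared Euclidean norm of a complex vector. -/
def nsq {M : ℕ} (x : Fin M → ℂ) : ℝ := ∑ i, Complex.normSq (x i)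

/-- outer product `x x*`. -/
def outerP {M : ℕ} (x : Fin M → ℂ) : Matrix (Fin M) (Fin M) ℂ :=
  Matrix.vecMulVec x (star x)

/-- the (real) quadratic form `d* A d`. -/
def quadForm {M : ℕ} (d : Fin M → ℂ) (A : Matrix (Fin M) (Fin M) ℂ) : ℝ :=
  (star d ⬝ᵥ (A *ᵥ d)).re

/-- `Γ(c, v) = σ₀² h₀h₀* + ∑ l, c_l h_l h_l* + v I`.  Index `0` is the desired source and
index `l.succ` is the `l`-th interference. -/
def Gam {M N : ℕ} (h : Fin (N + 1) → Fin M → ℂ) (σ0sq : ℝ) (c : Fin N → ℝ) (v : ℝ) :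
    Matrix (Fin M) (Fin M) ℂ :=
  σ0sq • outerP (h 0) + ∑ l : Fin N, c l • outerP (h l.succ)
    + v • (1 : Matrix (Fin M) (Fin M) ℂ)

/-- output SIR toward interference `j`: `q(d₀, Γ) / q(d_j, Γ)`. -/
def SIRj {M N : ℕ} (d : Fin (N + 1) → Fin M → ℂ) (j : Fin N)
    (A : Matrix (Fin M) (Fin M) ℂ) : ℝ :=
  quadForm (d 0) A / quadForm (d j.succ) A

/-- the Riemannian interference coefficients
`c_l^R(v) = ((σ_l²‖h_l‖² + v)^{τ_l} v^{1-τ_l} - v)/‖h_l‖²`. -/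
def cRcoef {M N : ℕ} (h : Fin (N + 1) → Fin M → ℂ) (σsq τ : Fin N → ℝ) (v : ℝ)
    (l : Fin N) : ℝ :=
  ((σsq l * nsq (h l.succ) + v) ^ (τ l) * v ^ (1 - τ l) - v) / nsq (h l.succ)

section Helpers

lemma quadForm_add {M : ℕ} (d : Fin M → ℂ) (A B : Matrix (Fin M) (Fin M) ℂ) :
    quadForm d (A + B) = quadForm d A + quadForm d B := by
  simp [quadForm, Matrix.add_mulVec, dotProduct_add]

lemma quadForm_smul {M : ℕ} (d : Fin M → ℂ) (c : ℝ) (A : Matrix (Fin M) (Fin M) ℂ) :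
    quadForm d (c • A) = c * quadForm d A := by
  simp [quadForm, Matrix.smul_mulVec, dotProduct_smul, Complex.smul_re]

lemma quadForm_zero {M : ℕ} (d : Fin M → ℂ) : quadForm d 0 = 0 := by
  simp [quadForm]

lemma quadForm_sum {M : ℕ} {ι : Type*} (d : Fin M → ℂ) (s : Finset ι)
    (A : ι → Matrix (Fin M) (Fin M) ℂ) :
    quadForm d (∑ l ∈ s, A l) = ∑ l ∈ s, quadForm d (A l) := by
  classical
  induction s using Finset.cons_induction with
  | empty => simp [quadForm_zero]
  | cons a s ha ih => rw [Finset.sum_cons, Finset.sum_cons, quadForm_add, ih]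

lemma quadForm_outer {M : ℕ} (d x : Fin M → ℂ) :
    quadForm d (outerP x) = ‖star d ⬝ᵥ x‖ ^ 2 := by
  have h1 : (outerP x) *ᵥ d = (star x ⬝ᵥ d) • x := by
    ext i
    simp [outerP, Matrix.vecMulVec, Matrix.mulVec, dotProduct, Finset.mul_sum]
    rw [Finset.sum_mul]
    exact Finset.sum_congr rfl fun _ _ => by ring
  have h2 : star x ⬝ᵥ d = star (star d ⬝ᵥ x) := by
    rw [star_dotProduct]
  rw [quadForm, h1, dotProduct_smul, h2, smul_eq_mul]
  set z := star d ⬝ᵥ x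
  have h3 : (star z * z).re = Complex.normSq z := by
    simp [Complex.normSq_apply, Complex.mul_re]
  rw [h3]
  simp [Complex.normSq_eq_norm_sq]

lemma quadForm_one {M : ℕ} (d : Fin M → ℂ) (v : ℝ) :
    quadForm d (v • (1 : Matrix (Fin M) (Fin M) ℂ)) = v * nsq d := by
  simp [quadForm, Matrix.smul_mulVec, Matrix.one_mulVec, dotProduct_smul,
    Complex.smul_re, nsq, dotProduct, Complex.re_sum, Complex.normSq_apply, Complex.mul_re,
    Finset.mul_sum]
  exact Finset.sum_congr rfl fun _ _ => by ring

lemma nsq_pos {M : ℕ} {x : Fin M → ℂ} (hx : x ≠ 0) : 0 < nsq x := by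
  have h0 : 0 ≤ nsq x := Finset.sum_nonneg fun i _ => Complex.normSq_nonneg _
  rcases h0.lt_or_eq with h | h
  · exact h
  · exfalso; apply hx; funext i
    have := (Finset.sum_eq_zero_iff_of_nonneg (fun i _ => Complex.normSq_nonneg (x i))).mp h.symm i (mem_univ i)
    simpa [Complex.normSq_eq_zero] using this

end Helpers

/-- With `σ₀² = 1`, among the family
`Γ_a = h₀h₀* + ∑ l, a_l h_l h_l* + v I` with nonnegative coefficients `a`, the matrix
`Γ_opt = h₀h₀* + v I` (i.e. `a = 0`) maximizes the output SIR toward interference `j`: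
`SIR_j(Γ_a) ≤ SIR_j(Γ_opt)`. -/
theorem SIR_maximized_at_zero_coefficients
    (M N : ℕ) (hM : 1 ≤ M) (hN : 1 ≤ N)
    (h : Fin (N + 1) → Fin M → ℂ)
    (hnz : ∀ r, h r ≠ 0)
    (horth : ∀ r s, r ≠ s → star (h r) ⬝ᵥ h s = 0)
    (d : Fin (N + 1) → Fin M → ℂ)
    (κ ρ : ℝ) (hρ : 0 ≤ ρ) (hκρ : ρ < κ)
    (hd : ∀ r, nsq (d r) = M)
    (hdr : ∀ r, ‖star (d r) ⬝ᵥ h r‖ ^ 2 = κ * M * nsq (h r))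
    (hds : ∀ r s, r ≠ s → ‖star (d r) ⬝ᵥ h s‖ ^ 2 = ρ * M * nsq (h s))
    (j : Fin N) (v : ℝ) (hv : 0 < v) :
    ∀ a : Fin N → ℝ, (∀ l, 0 ≤ a l) →
      SIRj d j (Gam h 1 a v) ≤ SIRj d j (Gam h 1 (fun _ => 0) v) := by
  intro a ha
  have Mpos : (0:ℝ) < (M:ℝ) := by exact_mod_cast Nat.lt_of_lt_of_le Nat.zero_lt_one hM
  have κpos : 0 < κ := lt_of_le_of_lt hρ hκρ
  have Hnn : ∀ r, 0 < nsq (h r) := fun r => nsq_pos (hnz r)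
  have qG : ∀ (e : Fin M → ℂ) (c : Fin N → ℝ),
      quadForm e (Gam h 1 c v)
        = ‖star e ⬝ᵥ h 0‖ ^ 2 + (∑ l, c l * ‖star e ⬝ᵥ h l.succ‖ ^ 2) + v * nsq e := by
    intro e c
    rw [Gam, quadForm_add, quadForm_add, quadForm_smul, quadForm_outer, quadForm_one, one_mul,
      quadForm_sum]
    congr 1
    congr 1
    exact Finset.sum_congr rfl fun l _ => by rw [quadForm_smul, quadForm_outer]
  set H0 : ℝ := nsq (h 0) with hH0
  set Hj : ℝ := nsq (h j.succ) with hHj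
  set T : ℝ := ∑ l, a l * ((M:ℝ) * nsq (h l.succ)) with hT
  have Tnn : 0 ≤ T :=
    Finset.sum_nonneg fun l _ => mul_nonneg (ha l) (mul_nonneg Mpos.le (Hnn _).le)
  have e0 : quadForm (d 0) (Gam h 1 a v) = κ * M * H0 + ρ * T + v * M := by
    rw [qG, hd, hdr 0]
    congr 1
    congr 1
    rw [hT, Finset.mul_sum]
    refine Finset.sum_congr rfl fun l _ => ?_
    rw [hds 0 l.succ (Fin.succ_ne_zero l).symm]
    ring
  have ej : quadForm (d j.succ) (Gam h 1 a v)
      = ρ * M * H0 + (ρ * T + (κ - ρ) * (a j * ((M:ℝ) * Hj))) + v * M := by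
    rw [qG, hd, hds j.succ 0 (Fin.succ_ne_zero j)]
    congr 1
    congr 1
    have key : (∑ l, a l * ‖star (d j.succ) ⬝ᵥ h l.succ‖ ^ 2)
        = ∑ l, (ρ * (a l * ((M:ℝ) * nsq (h l.succ)))
            + if l = j then (κ - ρ) * (a j * ((M:ℝ) * Hj)) else 0) := by
      refine Finset.sum_congr rfl fun l _ => ?_
      by_cases hl : l = j
      · subst hl
        rw [hdr l.succ]
        simp only [eq_self_iff_true, if_true, hHj]
        ring
      · rw [hds j.succ l.succ (fun hc => hl (Fin.succ_injective _ hc).symm)]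
        simp only [if_neg hl]
        ring
    rw [key, Finset.sum_add_distrib, Finset.sum_ite_eq', if_pos (Finset.mem_univ j),
      ← Finset.mul_sum, ← hT]
  have z0 : quadForm (d 0) (Gam h 1 (fun _ => 0) v) = κ * M * H0 + v * M := by
    rw [qG, hd, hdr 0]; simp [hH0]
  have zj : quadForm (d j.succ) (Gam h 1 (fun _ => 0) v) = ρ * M * H0 + v * M := by
    rw [qG, hd, hds j.succ 0 (Fin.succ_ne_zero j)]; simp [hH0]
  have vM : 0 < v * M := mul_pos hv Mpos
  have ajnn : 0 ≤ a j * ((M:ℝ) * Hj) := mul_nonneg (ha j) (mul_nonneg Mpos.le (Hnn _).le)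
  have ρH0 : 0 ≤ ρ * M * H0 := mul_nonneg (mul_nonneg hρ Mpos.le) (Hnn 0).le
  have κH0 : 0 ≤ κ * M * H0 := mul_nonneg (mul_nonneg κpos.le Mpos.le) (Hnn 0).le
  have ρTnn : 0 ≤ ρ * T := mul_nonneg hρ Tnn
  have κρnn : 0 ≤ κ - ρ := sub_nonneg.2 hκρ.le
  have dz : 0 < ρ * M * H0 + v * M := by linarith
  have da : 0 < ρ * M * H0 + (ρ * T + (κ - ρ) * (a j * ((M:ℝ) * Hj))) + v * M := by
    nlinarith [mul_nonneg κρnn ajnn]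
  rw [SIRj, SIRj, e0, ej, z0, zj, div_le_div_iff₀ da dz]
  have A : 0 ≤ ρ * T * ((κ - ρ) * ((M:ℝ) * H0)) :=
    mul_nonneg ρTnn (mul_nonneg κρnn (mul_nonneg Mpos.le (Hnn 0).le))
  have B : 0 ≤ (κ * M * H0 + v * M) * ((κ - ρ) * (a j * ((M:ℝ) * Hj))) :=
    mul_nonneg (by linarith) (mul_nonneg κρnn ajnn)
  nlinarith [A, B]
end
end

section
/- Fix j ∈ {1,…,N}, v > 0, τ_j ∈ (0,1), and fix all interference powers σ_l² > 0 for l ≠ j. Regarding the Euclidean mean Γ_E as a function of the j-th interference power a > 0 (i.e., Γ_E(a) = σ₀²·h₀h₀* + a·τ_j·h_j h_j* + Σ_{l≠j} σ_l²τ_l·h_l h_l* + v·I), one has SIR_j(Γ_E(a)) → ρ/κ as a → ∞. In particular, since ρ < κ, the Euclidean output SIR toward interference j is eventually smaller than 1 as the interference power grows. -/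
open Matrix Finset Filter Topology

noncomputable section

lemma nsq_nonneg {M : ℕ} (x : Fin M → ℂ) : 0 ≤ nsq x :=
  Finset.sum_nonneg fun i _ => Complex.normSq_nonneg _

lemma outerP_mulVec {M : ℕ} (x e : Fin M → ℂ) :
    outerP x *ᵥ e = (star x ⬝ᵥ e) • x := by
  funext i
  simp only [outerP, mulVec, dotProduct, vecMulVec_apply, Pi.smul_apply, smul_eq_mul]
  rw [Finset.sum_mul]
  exact Finset.sum_congr rfl fun j _ => by ring

lemma quad_outer {M : ℕ} (x e : Fin M → ℂ) :
    (star e ⬝ᵥ (outerP x *ᵥ e)).re = ‖star e ⬝ᵥ x‖ ^ 2 := by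
  rw [outerP_mulVec, dotProduct_smul, smul_eq_mul, star_dotProduct]
  have : star (star e ⬝ᵥ x) * (star e ⬝ᵥ x) = (Complex.normSq (star e ⬝ᵥ x) : ℂ) := by
    rw [Complex.star_def, mul_comm, Complex.mul_conj]
  rw [this, Complex.ofReal_re, Complex.normSq_eq_norm_sq]

lemma sum_mulVec' {M : ℕ} {ι : Type*} (s : Finset ι) (A : ι → Matrix (Fin M) (Fin M) ℂ)
    (e : Fin M → ℂ) : (∑ l ∈ s, A l) *ᵥ e = ∑ l ∈ s, A l *ᵥ e := by
  funext i
  have h1 : ((∑ l ∈ s, A l) *ᵥ e) i = ∑ j, (∑ l ∈ s, A l i j) * e j := by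
    simp [mulVec, dotProduct, Matrix.sum_apply]
  rw [h1]
  have h2 : (∑ l ∈ s, A l *ᵥ e) i = ∑ l ∈ s, ∑ j, A l i j * e j := by
    simp [mulVec, dotProduct, Matrix.sum_apply]
  rw [h2, Finset.sum_comm]
  exact Finset.sum_congr rfl fun j _ => by rw [Finset.sum_mul]

lemma dot_sum' {M : ℕ} {ι : Type*} (s : Finset ι) (e : Fin M → ℂ) (f : ι → Fin M → ℂ) :
    e ⬝ᵥ ∑ l ∈ s, f l = ∑ l ∈ s, e ⬝ᵥ f l := by
  simp only [dotProduct, Finset.sum_apply, Finset.mul_sum]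
  exact Finset.sum_comm

lemma dot_self_re {M : ℕ} (e : Fin M → ℂ) : (star e ⬝ᵥ e).re = nsq e := by
  rw [dotProduct, Complex.re_sum]
  exact Finset.sum_congr rfl fun i _ => by
    rw [Pi.star_apply, Complex.star_def, mul_comm, Complex.mul_conj, Complex.ofReal_re]

lemma quadForm_Gam {M N : ℕ} (h : Fin (N + 1) → Fin M → ℂ) (σ0sq : ℝ) (c : Fin N → ℝ)
    (v : ℝ) (e : Fin M → ℂ) :
    quadForm e (Gam h σ0sq c v)
      = σ0sq * ‖star e ⬝ᵥ h 0‖ ^ 2 + ∑ l : Fin N, c l * ‖star e ⬝ᵥ h l.succ‖ ^ 2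
        + v * nsq e := by
  unfold quadForm Gam
  rw [add_mulVec, add_mulVec, dotProduct_add, dotProduct_add, Complex.add_re, Complex.add_re]
  congr 1
  · congr 1
    · rw [smul_mulVec, dotProduct_smul, Complex.smul_re, smul_eq_mul, quad_outer]
    · rw [sum_mulVec', dot_sum', Complex.re_sum]
      exact Finset.sum_congr rfl fun l _ => by
        rw [smul_mulVec, dotProduct_smul, Complex.smul_re, smul_eq_mul, quad_outer]
  · rw [smul_mulVec, one_mulVec, dotProduct_smul, Complex.smul_re, smul_eq_mul,
      dot_self_re]

/-- Regarding the Euclidean mean as a function of the `j`-th interference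
power `a`, i.e. `Γ_E(a) = Γ(c, v)` with `c_j = a τ_j` and `c_l = σ_l² τ_l` for `l ≠ j`,
one has `SIR_j(Γ_E(a)) → ρ/κ` as `a → ∞`; in particular, since `ρ < κ`, the Euclidean
output SIR toward interference `j` is eventually smaller than `1`. -/
theorem euclidean_SIR_tendsto_ratio
    (M N : ℕ) (hM : 1 ≤ M) (hN : 1 ≤ N)
    (h : Fin (N + 1) → Fin M → ℂ)
    (hnz : ∀ r, h r ≠ 0)
    (horth : ∀ r s, r ≠ s → star (h r) ⬝ᵥ h s = 0)
    (d : Fin (N + 1) → Fin M → ℂ)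
    (κ ρ : ℝ) (hρ : 0 ≤ ρ) (hκρ : ρ < κ)
    (hd : ∀ r, nsq (d r) = M)
    (hdr : ∀ r, ‖star (d r) ⬝ᵥ h r‖ ^ 2 = κ * M * nsq (h r))
    (hds : ∀ r s, r ≠ s → ‖star (d r) ⬝ᵥ h s‖ ^ 2 = ρ * M * nsq (h s))
    (σ0sq : ℝ) (hσ0 : 0 < σ0sq)
    (σsq : Fin N → ℝ) (hσ : ∀ l, 0 < σsq l)
    (τ : Fin N → ℝ) (hτ : ∀ l, τ l ∈ Set.Ioo (0 : ℝ) 1)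
    (j : Fin N) (v : ℝ) (hv : 0 < v)
    (ΓE : ℝ → Matrix (Fin M) (Fin M) ℂ)
    (hΓE : ∀ a, ΓE a
      = Gam h σ0sq (fun l => if l = j then a * τ j else σsq l * τ l) v) :
    Tendsto (fun a => SIRj d j (ΓE a)) atTop (𝓝 (ρ / κ)) ∧
    ∀ᶠ a in atTop, SIRj d j (ΓE a) < 1 := by
  have hκ : 0 < κ := lt_of_le_of_lt hρ hκρ
  have hMpos : (0:ℝ) < (M:ℝ) := by exact_mod_cast hM
  have hB : 0 < τ j * ((M:ℝ) * nsq (h j.succ)) :=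
    mul_pos (hτ j).1 (mul_pos hMpos (nsq_pos (hnz j.succ)))
  set B : ℝ := τ j * ((M:ℝ) * nsq (h j.succ)) with hBdef
  -- generic quadratic form of ΓE a
  have hq : ∀ (a : ℝ) (e : Fin M → ℂ), quadForm e (ΓE a)
      = a * (τ j * ‖star e ⬝ᵥ h j.succ‖ ^ 2)
        + (σ0sq * ‖star e ⬝ᵥ h 0‖ ^ 2
          + ∑ l ∈ Finset.univ.erase j, (σsq l * τ l) * ‖star e ⬝ᵥ h l.succ‖ ^ 2
          + v * nsq e) := by
    intro a e
    rw [hΓE, quadForm_Gam]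
    rw [← Finset.add_sum_erase _ _ (Finset.mem_univ j)]
    have hsum : ∑ l ∈ Finset.univ.erase j,
        (if l = j then a * τ j else σsq l * τ l) * ‖star e ⬝ᵥ h l.succ‖ ^ 2
        = ∑ l ∈ Finset.univ.erase j, (σsq l * τ l) * ‖star e ⬝ᵥ h l.succ‖ ^ 2 :=
      Finset.sum_congr rfl fun l hl => by
        rw [if_neg (Finset.ne_of_mem_erase hl)]
    rw [hsum, if_pos rfl]
    ring
  set C0 : ℝ := σ0sq * ‖star (d 0) ⬝ᵥ h 0‖ ^ 2
      + ∑ l ∈ Finset.univ.erase j, (σsq l * τ l) * ‖star (d 0) ⬝ᵥ h l.succ‖ ^ 2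
      + v * nsq (d 0) with hC0def
  set Cj : ℝ := σ0sq * ‖star (d j.succ) ⬝ᵥ h 0‖ ^ 2
      + ∑ l ∈ Finset.univ.erase j, (σsq l * τ l) * ‖star (d j.succ) ⬝ᵥ h l.succ‖ ^ 2
      + v * nsq (d j.succ) with hCjdef
  have hCnonneg : ∀ e : Fin M → ℂ, 0 ≤ σ0sq * ‖star e ⬝ᵥ h 0‖ ^ 2
      + ∑ l ∈ Finset.univ.erase j, (σsq l * τ l) * ‖star e ⬝ᵥ h l.succ‖ ^ 2
      + v * nsq e := by
    intro e
    have h1 : 0 ≤ σ0sq * ‖star e ⬝ᵥ h 0‖ ^ 2 :=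
      mul_nonneg hσ0.le (sq_nonneg _)
    have h2 : 0 ≤ ∑ l ∈ Finset.univ.erase j, (σsq l * τ l) * ‖star e ⬝ᵥ h l.succ‖ ^ 2 :=
      Finset.sum_nonneg fun l _ =>
        mul_nonneg (mul_nonneg (hσ l).le (hτ l).1.le) (sq_nonneg _)
    have h3 : 0 ≤ v * nsq e := mul_nonneg hv.le (nsq_nonneg e)
    linarith
  have hC0 : 0 ≤ C0 := hCnonneg (d 0)
  have hCj : 0 ≤ Cj := hCnonneg (d j.succ)
  have hq0 : ∀ a : ℝ, quadForm (d 0) (ΓE a) = a * (ρ * B) + C0 := by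
    intro a
    rw [hq a (d 0), hds 0 j.succ (Fin.succ_ne_zero j).symm, hC0def, hBdef]
    ring
  have hqj : ∀ a : ℝ, quadForm (d j.succ) (ΓE a) = a * (κ * B) + Cj := by
    intro a
    rw [hq a (d j.succ), hdr j.succ, hCjdef, hBdef]
    ring
  have hfun : ∀ a : ℝ, SIRj d j (ΓE a) = (a * (ρ * B) + C0) / (a * (κ * B) + Cj) := by
    intro a; rw [SIRj, hq0, hqj]
  -- the limit
  have hnum : Tendsto (fun a : ℝ => ρ * B + C0 / a) atTop (𝓝 (ρ * B + 0)) :=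
    tendsto_const_nhds.add (Tendsto.div_atTop tendsto_const_nhds tendsto_id)
  have hden : Tendsto (fun a : ℝ => κ * B + Cj / a) atTop (𝓝 (κ * B + 0)) :=
    tendsto_const_nhds.add (Tendsto.div_atTop tendsto_const_nhds tendsto_id)
  have hdenne : κ * B + 0 ≠ 0 := by positivity
  have hlim0 : Tendsto (fun a : ℝ => (ρ * B + C0 / a) / (κ * B + Cj / a)) atTop
      (𝓝 ((ρ * B + 0) / (κ * B + 0))) := hnum.div hden hdenne
  have hval : (ρ * B + 0) / (κ * B + 0) = ρ / κ := by
    rw [add_zero, add_zero, mul_div_mul_right _ _ (ne_of_gt hB)]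
  rw [hval] at hlim0
  have heq : ∀ᶠ a : ℝ in atTop,
      (ρ * B + C0 / a) / (κ * B + Cj / a) = SIRj d j (ΓE a) := by
    filter_upwards [eventually_ge_atTop (1 : ℝ)] with a ha
    have ha0 : (0:ℝ) < a := lt_of_lt_of_le one_pos ha
    rw [hfun a]
    have hd1 : 0 < κ * B + Cj / a := by positivity
    have hd2 : 0 < a * (κ * B) + Cj := by positivity
    rw [div_eq_div_iff (ne_of_gt hd1) (ne_of_gt hd2)]
    field_simp
  have hT : Tendsto (fun a => SIRj d j (ΓE a)) atTop (𝓝 (ρ / κ)) :=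
    Tendsto.congr' heq hlim0
  refine ⟨hT, ?_⟩
  have hlt : ρ / κ < 1 := (div_lt_one hκ).mpr hκρ
  exact hT.eventually_lt_const hlt
end
end
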